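/- arXiv:1202.2824 — 2 statements merged into one kernel-verified Lean document; each statement's English description precedes it below -/
import Mathlib

section
/- With A*_{m,α} f = Σ_{k,j} ((1/|Q_{j,α}^k|) ∫_{Q_j^k} f) χ_{Q_{j,α}^k}, where {Q_j^k} is a sparse family in the standard dyadic grid and Q_{j,α}^k ∈ D_α satisfies 2^m Q_j^k ⊆ Q_{j,α}^k and ℓ(Q_{j,α}^k) ≤ 6 · 2^m ℓ(Q_j^k), we have the weak-type bound ‖A*_{m,α} f‖_{L^{1,∞}} ≤ C(n) m ‖f‖_{L¹} for all f ∈ L¹(ℝⁿ) and m ∈ ℕ, m ≥ 1. -/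
open Set MeasureTheory ENNReal NNReal

/-- The shifted dyadic cube `2^{-k}([0,1)ⁿ + j + α)` of the grid `D_α`. -/
def sCube {n : ℕ} (α : Fin n → ℝ) (k : ℤ) (j : Fin n → ℤ) : Set (Fin n → ℝ) :=
  {x | ∀ i, (2:ℝ)^(-k) * ((j i : ℝ) + α i) ≤ x i ∧ x i < (2:ℝ)^(-k) * ((j i : ℝ) + 1 + α i)}

/-- The standard dyadic cube `2^{-k}([0,1)ⁿ + j)`. -/
def dCube {n : ℕ} (k : ℤ) (j : Fin n → ℤ) : Set (Fin n → ℝ) := sCube (fun _ => 0) k j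

/-- The concentric dilate `t·Q` of the dyadic cube `Q = dCube k j`. -/
def dilateD {n : ℕ} (k : ℤ) (j : Fin n → ℤ) (t : ℝ) : Set (Fin n → ℝ) :=
  {x | ∀ i, (2:ℝ)^(-k) * ((j i : ℝ) + 1/2) - t * (2:ℝ)^(-k) / 2 ≤ x i ∧
        x i < (2:ℝ)^(-k) * ((j i : ℝ) + 1/2) + t * (2:ℝ)^(-k) / 2}

/-- The formal adjoint `A*_{m,α} f = Σ_{k,j} ((1/|Q_{j,α}^k|)∫_{Q_j^k} f) χ_{Q_{j,α}^k}`. -/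
noncomputable def Astar {n : ℕ} (Q R : ℤ → ℕ → Set (Fin n → ℝ))
    (f : (Fin n → ℝ) → ℝ≥0∞) (x : Fin n → ℝ) : ℝ≥0∞ :=
  ∑' p : ℤ × ℕ,
    (R p.1 p.2).indicator (fun _ => (∫⁻ y in Q p.1 p.2, f y) / volume (R p.1 p.2)) x

/-!
Fix the height `t`. The maximal dyadic cubes on which the mean of `f` exceeds `t` (stopping
cubes) are disjoint with total volume at most `∫ f / t`; let `Ω` be the union of their triples,
so `t |Ω| ≤ 3ⁿ ∫ f`. Every cube `Q` of the sparse family either lies in a stopping cube, or has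
mean at most `t`, and then its mean lies in `(4^{-r-1} t, 4^{-r} t]` for some class `r`.

Off `Ω`, a cube `Q` inside a stopping cube `L` contributes only if its enlargement `R ⊇ Q`
leaves `3L`, which forces `ℓ(L) < ℓ(R) ≤ 2^{m+3} ℓ(Q)`. So only `m + 4` generations of cubes
inside each `L` contribute; cubes of one generation are disjoint, and the integral over `Ωᶜ` of
this part is at most `(m + 4) ∫ f`.

For the cubes of class `r`, expand the square of `G_r = ∑ c_Q χ_R` and pair each `R` with the
smaller cubes `R'` meeting it: these lie in `3R`, so the Carleson packing of a sparse family
(`∑_{Q ⊆ S} |Q| ≤ 2 |S|`) gives `∫ G_r² ≲ 3ⁿ 4^{-r} t ∫ f`. A weighted Cauchy–Schwarz inequality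
in `r` sums this to `∫ (∑_r G_r)² ≲ 3ⁿ t ∫ f`, and Chebyshev at height `t / 2` concludes.
-/

namespace SparseAdjoint

variable {n : ℕ}

/-! ### Sums, integrals and Chebyshev bounds in `ℝ≥0∞` -/

lemma ennreal_two_mul_le_add_sq (a b : ℝ≥0∞) : 2 * a * b ≤ a ^ 2 + b ^ 2 := by
  rcases eq_or_ne a ⊤ with rfl | ha
  · rcases eq_or_ne b 0 with rfl | hb <;> simp [*]
  rcases eq_or_ne b ⊤ with rfl | hb
  · simp
  lift a to ℝ≥0 using ha
  lift b to ℝ≥0 using hb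
  exact_mod_cast two_mul_le_add_sq a b

lemma tsum_sq_le_of_mul_eq_one {ι : Type*} (a w v : ι → ℝ≥0∞) (hwv : ∀ i, w i * v i = 1) :
    (∑' i, a i) ^ 2 ≤ (∑' i, w i) * ∑' i, v i * a i ^ 2 := by
  set h := fun i => v i * a i
  have ha : ∀ i, a i = w i * h i := fun i => by rw [← mul_assoc, hwv, one_mul]
  have hwh : ∀ i, w i * h i ^ 2 = v i * a i ^ 2 := fun i => by
    calc w i * (v i * a i) ^ 2 = (w i * v i) * (v i * a i ^ 2) := by ring
    _ = v i * a i ^ 2 := by rw [hwv, one_mul]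
  have hsq : (∑' i, a i) ^ 2 = ∑' i, ∑' s, a i * a s := by
    simp_rw [sq, ← ENNReal.tsum_mul_right, ← ENNReal.tsum_mul_left]
  refine (ENNReal.mul_le_mul_iff_right two_ne_zero ofNat_ne_top).1 ?_
  calc 2 * (∑' i, a i) ^ 2 = ∑' i, ∑' s, 2 * a i * a s := by
        simp_rw [hsq, ← ENNReal.tsum_mul_left, mul_assoc]
  _ ≤ ∑' i, ∑' s, (w s * (w i * h i ^ 2) + w i * (w s * h s ^ 2)) := by
        gcongr with i s
        calc 2 * a i * a s = w i * w s * (2 * h i * h s) := by rw [ha i, ha s]; ring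
        _ ≤ w i * w s * (h i ^ 2 + h s ^ 2) := by gcongr; exact ennreal_two_mul_le_add_sq _ _
        _ = _ := by ring
  _ = 2 * ((∑' i, w i) * ∑' i, v i * a i ^ 2) := by
        simp_rw [hwh, ENNReal.tsum_add, ENNReal.tsum_mul_left, ENNReal.tsum_mul_right]
        rw [ENNReal.tsum_mul_left, two_mul]

lemma tsum_tsum_le_two_mul_of_symm {ι : Type*} (x : ι → ι → ℝ≥0∞) (hx : ∀ i s, x i s = x s i)
    (ℓ : ι → ℝ) : ∑' i, ∑' s, x i s ≤ 2 * ∑' i, ∑' s, if ℓ s ≤ ℓ i then x i s else 0 := by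
  calc ∑' i, ∑' s, x i s
      ≤ ∑' i, ∑' s, ((if ℓ s ≤ ℓ i then x i s else 0) + if ℓ i ≤ ℓ s then x s i else 0) := by
        gcongr with i s
        rcases le_total (ℓ s) (ℓ i) with h | h
        · simp [h]
        · simp [h, hx i s]
  _ = 2 * ∑' i, ∑' s, if ℓ s ≤ ℓ i then x i s else 0 := by
        simp_rw [ENNReal.tsum_add]
        rw [ENNReal.tsum_comm (f := fun i s => if ℓ i ≤ ℓ s then x s i else 0),
          two_mul]

lemma lintegral_tsum_indicator_sq {X ι : Type*} [MeasurableSpace X] [Countable ι] (μ : Measure X)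
    {R : ι → Set X} (hR : ∀ i, MeasurableSet (R i)) (c : ι → ℝ≥0∞) :
    ∫⁻ x, (∑' i, (R i).indicator (fun _ => c i) x) ^ 2 ∂μ =
      ∑' i, ∑' s, c i * c s * μ (R i ∩ R s) := by
  have hsq : ∀ x, (∑' i, (R i).indicator (fun _ => c i) x) ^ 2 =
      ∑' i, ∑' s, (R i ∩ R s).indicator (fun _ => c i * c s) x := fun x => by
    simp_rw [sq, ← ENNReal.tsum_mul_right, ← ENNReal.tsum_mul_left, inter_indicator_mul]
  have hmeas : ∀ i s, Measurable ((R i ∩ R s).indicator fun _ => c i * c s) :=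
    fun i s => measurable_const.indicator ((hR i).inter (hR s))
  simp_rw [hsq]
  rw [lintegral_tsum fun i => (Measurable.tsum (hmeas i)).aemeasurable]
  simp_rw [lintegral_tsum fun s => (hmeas _ s).aemeasurable,
    lintegral_indicator_const ((hR _).inter (hR _))]

lemma mul_measure_half_lt_le {X : Type*} [MeasurableSpace X] {μ : Measure X} {g : X → ℝ≥0∞}
    (hg : AEMeasurable g μ) {t K : ℝ≥0∞} (ht0 : t ≠ 0) (htop : t ≠ ⊤)
    (h : ∫⁻ x, g x ^ 2 ∂μ ≤ K * t) : t * μ {x | t / 2 < g x} ≤ 4 * K := by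
  have hcheb : (t / 2) ^ 2 * μ {x | t / 2 < g x} ≤ K * t := calc
    _ ≤ (t / 2) ^ 2 * μ {x | (t / 2) ^ 2 ≤ g x ^ 2} := by
        gcongr
        exact fun hx => pow_le_pow_left₀ zero_le hx.le 2
    _ ≤ ∫⁻ x, g x ^ 2 ∂μ := mul_meas_ge_le_lintegral₀ (hg.pow_const 2) _
    _ ≤ K * t := h
  refine (ENNReal.mul_le_mul_iff_right ht0 htop).1 ?_
  have h4 : 4 * (t / 2) ^ 2 = t ^ 2 := calc
    4 * (t / 2) ^ 2 = t ^ 2 * (2 * 2⁻¹) ^ 2 := by rw [div_eq_mul_inv]; ring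
    _ = t ^ 2 := by rw [ENNReal.mul_inv_cancel two_ne_zero ofNat_ne_top, one_pow, mul_one]
  calc t * (t * μ {x | t / 2 < g x}) = 4 * ((t / 2) ^ 2 * μ {x | t / 2 < g x}) := by
        rw [← mul_assoc, ← mul_assoc, h4, sq]
  _ ≤ 4 * (K * t) := by gcongr
  _ = t * (4 * K) := by ring

lemma measure_lt_le_of_le_add {X : Type*} [MeasurableSpace X] {μ : Measure X}
    {g a b : X → ℝ≥0∞} {t : ℝ≥0∞} (ht : t ≠ ⊤) (h : ∀ x, g x ≤ a x + b x) (Ω : Set X) :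
    μ {x | t < g x} ≤ μ ({x | t / 2 ≤ a x} ∩ Ωᶜ) + μ Ω + μ {x | t / 2 < b x} := by
  have hsub : {x | t < g x} ⊆ ({x | t / 2 ≤ a x} ∩ Ωᶜ ∪ Ω) ∪ {x | t / 2 < b x} := by
    intro x hx
    by_cases hb : t / 2 < b x
    · exact Or.inr hb
    by_cases hΩ : x ∈ Ω
    · exact Or.inl (Or.inr hΩ)
    refine Or.inl (Or.inl ⟨?_, hΩ⟩)
    by_contra ha
    have := calc t < g x := hx
      _ ≤ a x + b x := h x
      _ < t / 2 + t / 2 := ENNReal.add_lt_add_of_lt_of_le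
          (ne_top_of_le_ne_top (ENNReal.div_ne_top ht two_ne_zero) (not_lt.1 hb))
          (not_le.1 ha) (not_lt.1 hb)
      _ = t := ENNReal.add_halves t
    exact this.false
  exact (measure_mono hsub).trans
    ((measure_union_le _ _).trans (by gcongr; exact measure_union_le _ _))

lemma exists_pow_four_mul_le_lt {x y : ℝ≥0∞} (hx : x ≠ 0) (hy : y ≠ ⊤) (hxy : x ≤ y) :
    ∃ r : ℕ, 4 ^ r * x ≤ y ∧ y < 4 ^ (r + 1) * x := by
  lift y to ℝ≥0 using hy
  lift x to ℝ≥0 using ne_top_of_le_ne_top coe_ne_top hxy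
  have hx' : 0 < x := pos_iff_ne_zero.2 (by exact_mod_cast hx)
  obtain ⟨r, h1, h2⟩ := exists_nat_pow_near (x := y / x) (y := 4)
    ((one_le_div hx').2 (by exact_mod_cast hxy)) (by norm_num)
  exact ⟨r, by exact_mod_cast (le_div_iff₀ hx').1 h1, by exact_mod_cast (div_lt_iff₀ hx').1 h2⟩

/-! ### Sparse families and the Carleson packing condition -/

section Sparse

variable {X ι κ : Type*} [MeasurableSpace X] {μ : Measure X}

structure IsSparse (μ : Measure X) (Q : ℤ → κ → Set X) : Prop where
  disjoint : ∀ k j j', j ≠ j' → Disjoint (Q k j) (Q k j')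
  iUnion_succ_subset : ∀ k, ⋃ j, Q (k + 1) j ⊆ ⋃ j, Q k j
  measure_inter_le : ∀ k j, μ ((⋃ i, Q (k + 1) i) ∩ Q k j) ≤ μ (Q k j) / 2

/-- The packing condition is tested on all measurable sets, not only on cubes of the family. -/
def IsCarleson (Λ : ℝ≥0∞) (μ : Measure X) (Q : ι → Set X) : Prop :=
  ∀ S, MeasurableSet S → ∑' i : {i // Q i ⊆ S}, μ (Q i) ≤ Λ * μ S

lemma IsCarleson.comp {Λ : ℝ≥0∞} {Q : ι → Set X} (hQ : IsCarleson Λ μ Q) {ι' : Type*}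
    {e : ι' → ι} (he : Function.Injective e) : IsCarleson Λ μ (Q ∘ e) := by
  intro S hS
  refine le_trans ?_ (hQ S hS)
  exact ENNReal.tsum_comp_le_tsum_of_injective (f := fun i => (⟨e i.1, i.2⟩ : {i // Q i ⊆ S}))
    (fun i i' h => Subtype.ext (he (congrArg Subtype.val h))) fun i => μ (Q i)

namespace IsSparse

variable {Q : ℤ → κ → Set X}

lemma iUnion_subset_of_le (hQ : IsSparse μ Q) {k k' : ℤ} (hk : k ≤ k') :
    ⋃ j, Q k' j ⊆ ⋃ j, Q k j := by
  induction k', hk using Int.leInduction with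
  | base => exact subset_rfl
  | succ k' _ ih => exact (hQ.iUnion_succ_subset k').trans ih

lemma measure_le_two_mul_diff (hQ : IsSparse μ Q) {k : ℤ} {j : κ} (hfin : μ (Q k j) ≠ ⊤) :
    μ (Q k j) ≤ 2 * μ (Q k j \ ⋃ i, Q (k + 1) i) := by
  have h : μ (Q k j) ≤ μ (Q k j) / 2 + μ (Q k j \ ⋃ i, Q (k + 1) i) :=
    (measure_le_inter_add_sdiff μ (Q k j) (⋃ i, Q (k + 1) i)).trans
      (by gcongr; rw [inter_comm]; exact hQ.measure_inter_le k j)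
  conv_lhs at h => rw [← ENNReal.add_halves (μ (Q k j))]
  rw [ENNReal.add_le_add_iff_left (ENNReal.div_ne_top hfin two_ne_zero)] at h
  calc μ (Q k j) = 2 * (μ (Q k j) / 2) := (ENNReal.mul_div_cancel two_ne_zero ofNat_ne_top).symm
  _ ≤ _ := by gcongr

lemma pairwise_disjoint_diff (hQ : IsSparse μ Q) :
    Pairwise (Function.onFun Disjoint fun p : ℤ × κ => Q p.1 p.2 \ ⋃ i, Q (p.1 + 1) i) := by
  have key : ∀ p q : ℤ × κ, p.1 < q.1 →
      Disjoint (Q p.1 p.2 \ ⋃ i, Q (p.1 + 1) i) (Q q.1 q.2 \ ⋃ i, Q (q.1 + 1) i) :=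
    fun p q hpq => disjoint_sdiff_left.mono_right
      (sdiff_subset.trans ((subset_iUnion (Q q.1) q.2).trans (hQ.iUnion_subset_of_le hpq)))
  rintro ⟨k, j⟩ ⟨k', j'⟩ hne
  rcases lt_trichotomy k k' with h | rfl | h
  · exact key _ _ h
  · exact (hQ.disjoint k j j' fun h => hne (by rw [h])).mono sdiff_subset sdiff_subset
  · exact (key _ _ h).symm

lemma isCarleson [Countable κ] (hQ : IsSparse μ Q) (hmeas : ∀ k j, MeasurableSet (Q k j))
    (hfin : ∀ k j, μ (Q k j) ≠ ⊤) : IsCarleson 2 μ fun p : ℤ × κ => Q p.1 p.2 := by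
  intro S hS
  calc ∑' p : {p : ℤ × κ // Q p.1 p.2 ⊆ S}, μ (Q p.1.1 p.1.2)
      ≤ ∑' p : {p : ℤ × κ // Q p.1 p.2 ⊆ S}, 2 * μ (Q p.1.1 p.1.2 \ ⋃ i, Q (p.1.1 + 1) i) :=
        ENNReal.tsum_le_tsum fun p => hQ.measure_le_two_mul_diff (hfin _ _)
    _ ≤ 2 * μ (⋃ p : {p : ℤ × κ // Q p.1 p.2 ⊆ S}, Q p.1.1 p.1.2 \ ⋃ i, Q (p.1.1 + 1) i) := by
        rw [ENNReal.tsum_mul_left]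
        gcongr
        exact tsum_meas_le_meas_iUnion_of_disjoint μ
          (fun p => (hmeas _ _).diff (.iUnion fun i => hmeas _ _))
          (hQ.pairwise_disjoint_diff.comp_of_injective Subtype.val_injective)
    _ ≤ 2 * μ S := by
        gcongr
        exact iUnion_subset fun p => sdiff_subset.trans p.2

lemma eq_of_eq (hQ : IsSparse μ Q) {p q : ℤ × κ} (h0 : μ (Q p.1 p.2) ≠ 0)
    (htop : μ (Q p.1 p.2) ≠ ⊤) (h : Q p.1 p.2 = Q q.1 q.2) : p = q := by
  have key : ∀ p q : ℤ × κ, p.1 < q.1 → Q p.1 p.2 = Q q.1 q.2 → μ (Q p.1 p.2) ≠ 0 →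
      μ (Q p.1 p.2) ≠ ⊤ → False := by
    intro p q hpq h h0 htop
    have hsub : Q p.1 p.2 ⊆ ⋃ i, Q (p.1 + 1) i :=
      h ▸ (subset_iUnion (Q q.1) q.2).trans (hQ.iUnion_subset_of_le hpq)
    have := hQ.measure_inter_le p.1 p.2
    rw [inter_eq_right.2 hsub] at this
    exact (ENNReal.half_lt_self h0 htop).not_ge this
  obtain ⟨k, j⟩ := p
  obtain ⟨k', j'⟩ := q
  rcases lt_trichotomy k k' with hk | rfl | hk
  · exact (key _ _ hk h h0 htop).elim
  · by_contra hne
    have := hQ.disjoint k j j' fun h => hne (by rw [h])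
    rw [← show Q k j = Q k j' from h, disjoint_self] at this
    exact h0 (by simp [this])
  · exact (key (k', j') (k, j) hk h.symm (h ▸ h0) (h ▸ htop)).elim

end IsSparse

end Sparse

/-! ### Cubes and dyadic cubes -/

def cube (a : Fin n → ℝ) (s : ℝ) : Set (Fin n → ℝ) :=
  univ.pi fun i => Ico (a i) (a i + s)

lemma measurableSet_cube (a : Fin n → ℝ) (s : ℝ) : MeasurableSet (cube a s) :=
  .univ_pi fun _ => measurableSet_Ico

lemma volume_cube (a : Fin n → ℝ) (s : ℝ) : volume (cube a s) = ENNReal.ofReal s ^ n := by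
  simp [cube, volume_pi_pi, Real.volume_Ico]

lemma volume_cube_triple (a : Fin n → ℝ) (s : ℝ) :
    volume (cube (fun i => a i - s) (3 * s)) = 3 ^ n * volume (cube a s) := by
  rw [volume_cube, volume_cube, ENNReal.ofReal_mul (by norm_num), mul_pow, ENNReal.ofReal_ofNat]

lemma cube_subset_triple {a b : Fin n → ℝ} {s s' : ℝ} (hs : s ≤ s')
    (h : (cube a s ∩ cube b s').Nonempty) : cube a s ⊆ cube (fun i => b i - s') (3 * s') := by
  obtain ⟨x, hx, hx'⟩ := h
  intro y hy i _
  have h1 := hx i trivial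
  have h2 := hx' i trivial
  have h3 := hy i trivial
  simp only [mem_Ico] at h1 h2 h3 ⊢
  constructor <;> linarith

noncomputable def side (k : ℤ) : ℝ := 2 ^ (-k)

lemma side_pos (k : ℤ) : 0 < side k := zpow_pos two_pos _

lemma side_le_side_iff {k k' : ℤ} : side k ≤ side k' ↔ k' ≤ k := by
  rw [side, side, zpow_le_zpow_iff_right₀ (by norm_num : (1:ℝ) < 2), neg_le_neg_iff]

lemma side_eq_side_mul_pow {k k' : ℤ} (h : k' ≤ k) : side k' = side k * 2 ^ (k - k').toNat := by
  rw [side, side, ← zpow_natCast, ← zpow_add₀ two_ne_zero, Int.toNat_of_nonneg (by omega)]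
  ring_nf

lemma sCube_eq_cube (α : Fin n → ℝ) (k : ℤ) (j : Fin n → ℤ) :
    sCube α k j = cube (fun i => side k * (j i + α i)) (side k) := by
  ext x
  simp only [sCube, cube, side, mem_ofPred_eq, mem_pi, mem_univ, true_implies, mem_Ico]
  refine forall_congr' fun i => ?_
  rw [show (2:ℝ) ^ (-k) * (j i + 1 + α i) = 2 ^ (-k) * (j i + α i) + 2 ^ (-k) by ring]

lemma dCube_eq_cube (k : ℤ) (j : Fin n → ℤ) :
    dCube k j = cube (fun i => side k * j i) (side k) := by
  simp [dCube, sCube_eq_cube]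

lemma mem_dCube_iff_floor {k : ℤ} {j : Fin n → ℤ} {x : Fin n → ℝ} :
    x ∈ dCube k j ↔ ∀ i, ⌊x i / side k⌋ = j i := by
  simp only [dCube_eq_cube, cube, mem_pi, mem_univ, true_implies, mem_Ico, Int.floor_eq_iff,
    le_div_iff₀ (side_pos k), div_lt_iff₀ (side_pos k)]
  exact forall_congr' fun i => by rw [add_mul, one_mul, mul_comm]

lemma floor_div_side_of_le {k k' : ℤ} (h : k' ≤ k) (x : ℝ) :
    ⌊x / side k'⌋ = ⌊x / side k⌋ / 2 ^ (k - k').toNat := by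
  rw [side_eq_side_mul_pow h, ← div_div,
    show (2 : ℝ) ^ (k - k').toNat = ((2 ^ (k - k').toNat : ℕ) : ℝ) by push_cast; rfl,
    Int.floor_div_natCast]
  push_cast
  rfl

lemma measurableSet_dCube (k : ℤ) (j : Fin n → ℤ) : MeasurableSet (dCube k j) := by
  rw [dCube_eq_cube]; exact measurableSet_cube _ _

lemma volume_dCube (k : ℤ) (j : Fin n → ℤ) : volume (dCube k j) = ENNReal.ofReal (side k) ^ n := by
  rw [dCube_eq_cube, volume_cube]

lemma volume_dCube_ne_zero (k : ℤ) (j : Fin n → ℤ) : volume (dCube k j) ≠ 0 := by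
  simp [volume_dCube, side_pos]

lemma volume_dCube_ne_top (k : ℤ) (j : Fin n → ℤ) : volume (dCube k j) ≠ ⊤ := by
  simp [volume_dCube]

lemma dCube_nonempty (k : ℤ) (j : Fin n → ℤ) : (dCube k j).Nonempty :=
  nonempty_of_measure_ne_zero (volume_dCube_ne_zero k j)

lemma dCube_subset_of_inter {k k' : ℤ} {j j' : Fin n → ℤ} (hk : k' ≤ k)
    (h : (dCube k j ∩ dCube k' j').Nonempty) : dCube k j ⊆ dCube k' j' := by
  obtain ⟨x, hx, hx'⟩ := h
  intro y hy
  rw [mem_dCube_iff_floor] at hx hx' hy ⊢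
  intro i
  rw [floor_div_side_of_le hk, hy, ← hx, ← floor_div_side_of_le hk, hx']

lemma eq_of_inter_dCube {k : ℤ} {j j' : Fin n → ℤ} (h : (dCube k j ∩ dCube k j').Nonempty) :
    j = j' := by
  obtain ⟨x, hx, hx'⟩ := h
  rw [mem_dCube_iff_floor] at hx hx'
  exact funext fun i => (hx i).symm.trans (hx' i)

lemma le_of_dCube_subset (hn : n ≠ 0) {k k' : ℤ} {j j' : Fin n → ℤ}
    (h : dCube k j ⊆ dCube k' j') : k' ≤ k := by
  have := measure_mono (μ := volume) h
  rw [volume_dCube, volume_dCube, ENNReal.pow_le_pow_left_iff hn,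
    ENNReal.ofReal_le_ofReal_iff (side_pos _).le, side_le_side_iff] at this
  exact this

lemma dCube_subset_dilateD {k : ℤ} {j : Fin n → ℤ} {t : ℝ} (ht : 1 ≤ t) :
    dCube k j ⊆ dilateD k j t := by
  intro x hx i
  have hs := side_pos k
  obtain ⟨h1, h2⟩ : side k * (j i + 0) ≤ x i ∧ x i < side k * (j i + 1 + 0) := hx i
  change side k * (j i + 1 / 2) - t * side k / 2 ≤ x i ∧
    x i < side k * (j i + 1 / 2) + t * side k / 2
  constructor <;> nlinarith

/-! ### Stopping cubes -/

section Stopping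

variable (f : (Fin n → ℝ) → ℝ≥0∞) (c : ℝ≥0∞)

def IsHeavy (k : ℤ) (j : Fin n → ℤ) : Prop :=
  c * volume (dCube k j) < ∫⁻ x in dCube k j, f x

def stoppingCubes : Set (ℤ × (Fin n → ℤ)) :=
  {p | IsHeavy f c p.1 p.2 ∧
    ∀ q : ℤ × (Fin n → ℤ), dCube p.1 p.2 ⊆ dCube q.1 q.2 → IsHeavy f c q.1 q.2 → p.1 ≤ q.1}

variable {f c}

lemma exists_le_of_isHeavy (hn : n ≠ 0) (hc : c ≠ 0) (hf : ∫⁻ x, f x ≠ ⊤) :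
    ∃ K : ℤ, ∀ k j, IsHeavy f c k j → K ≤ k := by
  obtain ⟨N, hN⟩ := ENNReal.exists_nat_mul_gt hc hf
  refine ⟨-N, fun k j hkj => ?_⟩
  by_contra! hk
  have hside : (N : ℝ) + 1 ≤ side k := by
    calc (N : ℝ) + 1 ≤ 2 ^ (N : ℤ) := by
          rw [zpow_natCast]; exact_mod_cast Nat.lt_two_pow_self
    _ ≤ side k := zpow_le_zpow_right₀ (by norm_num) (by omega)
  have hvol : (N : ℝ≥0∞) ≤ volume (dCube k j) := by
    rw [volume_dCube]
    calc (N : ℝ≥0∞) = ENNReal.ofReal N := by simp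
    _ ≤ ENNReal.ofReal (side k) := ENNReal.ofReal_le_ofReal (by linarith)
    _ ≤ ENNReal.ofReal (side k) ^ n :=
        le_self_pow₀ (by rw [← ENNReal.ofReal_one]; exact ENNReal.ofReal_le_ofReal (by linarith)) hn
  have := calc (N : ℝ≥0∞) * c ≤ c * volume (dCube k j) := by rw [mul_comm]; gcongr
    _ < ∫⁻ x in dCube k j, f x := hkj
    _ ≤ ∫⁻ x, f x := setLIntegral_le_lintegral _ _
  exact this.not_gt hN |>.elim

lemma exists_mem_stoppingCubes_superset (hn : n ≠ 0) (hc : c ≠ 0) (hf : ∫⁻ x, f x ≠ ⊤)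
    {k : ℤ} {j : Fin n → ℤ} (h : IsHeavy f c k j) :
    ∃ p ∈ stoppingCubes f c, dCube k j ⊆ dCube p.1 p.2 := by
  obtain ⟨K, hK⟩ := exists_le_of_isHeavy hn hc hf
  obtain ⟨k₀, ⟨j₀, hsub, hheavy⟩, hmin⟩ := Int.exists_least_of_bdd
    (P := fun k' => ∃ j', dCube k j ⊆ dCube k' j' ∧ IsHeavy f c k' j')
    ⟨K, fun k' ⟨j', _, h'⟩ => hK k' j' h'⟩ ⟨k, j, subset_rfl, h⟩
  exact ⟨(k₀, j₀), ⟨hheavy, fun q hq hqh => hmin q.1 ⟨q.2, hsub.trans hq, hqh⟩⟩, hsub⟩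

lemma pairwiseDisjoint_stoppingCubes :
    (stoppingCubes f c).PairwiseDisjoint fun p => dCube p.1 p.2 := by
  have key : ∀ p ∈ stoppingCubes f c, ∀ q ∈ stoppingCubes f c, p.1 ≤ q.1 →
      (dCube p.1 p.2 ∩ dCube q.1 q.2).Nonempty → p = q := by
    rintro ⟨k, j⟩ hp ⟨k', j'⟩ hq hle hne
    have hsub := dCube_subset_of_inter hle (inter_comm _ _ ▸ hne)
    obtain rfl : k = k' := le_antisymm hle (hq.2 (k, j) hsub hp.1)
    rw [show j = j' from eq_of_inter_dCube hne]
  intro p hp q hq hpq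
  rw [Function.onFun, disjoint_iff_inter_eq_empty, ← not_nonempty_iff_eq_empty]
  intro hne
  rcases le_total p.1 q.1 with h | h
  · exact hpq (key p hp q hq h hne)
  · exact hpq (key q hq p hp h (inter_comm _ _ ▸ hne)).symm

lemma mul_tsum_volume_stoppingCubes_le :
    c * ∑' p : stoppingCubes f c, volume (dCube p.1.1 p.1.2) ≤ ∫⁻ x, f x := by
  rw [← ENNReal.tsum_mul_left]
  calc _ ≤ ∑' p : stoppingCubes f c, ∫⁻ x in dCube p.1.1 p.1.2, f x :=
        ENNReal.tsum_le_tsum fun p => p.2.1.le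
  _ = ∫⁻ x in ⋃ p ∈ stoppingCubes f c, dCube p.1 p.2, f x :=
        (lintegral_biUnion (to_countable _) (fun p _ => measurableSet_dCube _ _)
          pairwiseDisjoint_stoppingCubes f).symm
  _ ≤ ∫⁻ x, f x := setLIntegral_le_lintegral _ _

def unionTriples (𝓛 : Set (ℤ × (Fin n → ℤ))) : Set (Fin n → ℝ) :=
  ⋃ L ∈ 𝓛, cube (fun l => side L.1 * L.2 l - side L.1) (3 * side L.1)

lemma measurableSet_unionTriples (𝓛 : Set (ℤ × (Fin n → ℤ))) :
    MeasurableSet (unionTriples 𝓛) :=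
  .biUnion (to_countable _) fun _ _ => measurableSet_cube _ _

lemma volume_unionTriples_le (𝓛 : Set (ℤ × (Fin n → ℤ))) :
    volume (unionTriples 𝓛) ≤ 3 ^ n * ∑' L : 𝓛, volume (dCube L.1.1 L.1.2) := by
  rw [← ENNReal.tsum_mul_left]
  refine (measure_biUnion_le _ (to_countable _) _).trans_eq (tsum_congr fun L => ?_)
  rw [volume_cube_triple, dCube_eq_cube]

lemma mul_volume_unionTriples_stoppingCubes_le :
    c * volume (unionTriples (stoppingCubes f c)) ≤ 3 ^ n * ∫⁻ x, f x := calc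
  c * volume (unionTriples (stoppingCubes f c))
      ≤ c * (3 ^ n * ∑' L : stoppingCubes f c, volume (dCube L.1.1 L.1.2)) := by
        gcongr; exact volume_unionTriples_le _
  _ = 3 ^ n * (c * ∑' L : stoppingCubes f c, volume (dCube L.1.1 L.1.2)) := by ring
  _ ≤ 3 ^ n * ∫⁻ x, f x := by gcongr; exact mul_tsum_volume_stoppingCubes_le

end Stopping

/-! ### Enlarged dyadic families and the operator `A*` -/

/-- `R i` plays the role of the paper's `Q^k_{j,α}` and `op` that of `A*_{m,α}`. -/
structure AdaptedFamily (n : ℕ) (ι : Type*) where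
  k : ι → ℤ
  j : ι → Fin n → ℤ
  corner : ι → Fin n → ℝ
  len : ι → ℝ
  dCube_subset : ∀ i, dCube (k i) (j i) ⊆ cube (corner i) (len i)

namespace AdaptedFamily

variable {ι : Type*} (D : AdaptedFamily n ι)

def Q (i : ι) : Set (Fin n → ℝ) := dCube (D.k i) (D.j i)

def R (i : ι) : Set (Fin n → ℝ) := cube (D.corner i) (D.len i)

noncomputable def coef (f : (Fin n → ℝ) → ℝ≥0∞) (i : ι) : ℝ≥0∞ :=
  (∫⁻ y in D.Q i, f y) / volume (D.R i)

noncomputable def op (f : (Fin n → ℝ) → ℝ≥0∞) (x : Fin n → ℝ) : ℝ≥0∞ :=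
  ∑' i, (D.R i).indicator (fun _ => D.coef f i) x

def restrict (s : Set ι) : AdaptedFamily n s where
  k i := D.k i
  j i := D.j i
  corner i := D.corner i
  len i := D.len i
  dCube_subset i := D.dCube_subset i

lemma Q_subset_R (i : ι) : D.Q i ⊆ D.R i := D.dCube_subset i

lemma measurableSet_Q (i : ι) : MeasurableSet (D.Q i) := measurableSet_dCube _ _

lemma measurableSet_R (i : ι) : MeasurableSet (D.R i) := measurableSet_cube _ _

lemma volume_R_ne_zero (i : ι) : volume (D.R i) ≠ 0 :=
  fun h => volume_dCube_ne_zero _ _ (measure_mono_null (D.Q_subset_R i) h)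

lemma volume_R_ne_top (i : ι) : volume (D.R i) ≠ ⊤ := by simp [R, volume_cube]

lemma coef_mul_volume_R (f : (Fin n → ℝ) → ℝ≥0∞) (i : ι) :
    D.coef f i * volume (D.R i) = ∫⁻ y in D.Q i, f y :=
  ENNReal.div_mul_cancel (D.volume_R_ne_zero i) (D.volume_R_ne_top i)

lemma measurable_op [Countable ι] (f : (Fin n → ℝ) → ℝ≥0∞) : Measurable (D.op f) :=
  Measurable.tsum fun i => measurable_const.indicator (D.measurableSet_R i)

lemma op_le_add_tsum (f : (Fin n → ℝ) → ℝ≥0∞) {s : Set ι} {t : ℕ → Set ι}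
    (h : ∀ i, ∫⁻ y in D.Q i, f y ≠ 0 → i ∈ s ∪ ⋃ r, t r) (x : Fin n → ℝ) :
    D.op f x ≤ (D.restrict s).op f x + ∑' r, (D.restrict (t r)).op f x := by
  set g := fun i => (D.R i).indicator (fun _ => D.coef f i) x
  have hsupp : g.support ⊆ s ∪ ⋃ r, t r := fun i hi => h i fun h0 => hi (by simp [g, coef, h0])
  calc D.op f x = ∑' i : ↥(s ∪ ⋃ r, t r), g i := (tsum_subtype_eq_of_support_subset hsupp).symm
  _ ≤ ∑' i : s, g i + ∑' i : ↥(⋃ r, t r), g i := ENNReal.tsum_union_le g s _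
  _ ≤ ∑' i : s, g i + ∑' r, ∑' i : t r, g i := by gcongr; exact ENNReal.tsum_iUnion_le_tsum g t

lemma mul_tsum_le_volume_R {Λ b t : ℝ≥0∞} {f : (Fin n → ℝ) → ℝ≥0∞}
    (hC : IsCarleson Λ volume D.Q) (hb : ∀ i, b * ∫⁻ y in D.Q i, f y ≤ t * volume (D.Q i))
    (i : ι) :
    b * ∑' s, (if D.len s ≤ D.len i then D.coef f s * volume (D.R i ∩ D.R s) else 0) ≤
      3 ^ n * Λ * t * volume (D.R i) := by
  set T := cube (fun l => D.corner i l - D.len i) (3 * D.len i)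
  -- a cube `R s` no larger than `R i` and meeting it lies in `T = 3 R i`, and `Q s ⊆ R s`
  have hterm : ∀ s, (if D.len s ≤ D.len i then D.coef f s * volume (D.R i ∩ D.R s) else 0) ≤
      {s | D.Q s ⊆ T}.indicator (fun s => ∫⁻ y in D.Q s, f y) s := by
    intro s
    split_ifs with hs
    · rcases (D.R i ∩ D.R s).eq_empty_or_nonempty with he | hne
      · simp [he]
      · have : D.Q s ⊆ T :=
          (D.Q_subset_R s).trans (cube_subset_triple hs (inter_comm (D.R i) _ ▸ hne))
        rw [indicator_of_mem this, ← D.coef_mul_volume_R]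
        gcongr
        exact inter_subset_right
    · exact zero_le
  calc b * ∑' s, (if D.len s ≤ D.len i then D.coef f s * volume (D.R i ∩ D.R s) else 0)
      ≤ b * ∑' s, {s | D.Q s ⊆ T}.indicator (fun s => ∫⁻ y in D.Q s, f y) s := by
        gcongr with s; exact hterm s
  _ = ∑' s : {s | D.Q s ⊆ T}, b * ∫⁻ y in D.Q s, f y := by
        rw [← tsum_subtype, ENNReal.tsum_mul_left]
  _ ≤ ∑' s : {s | D.Q s ⊆ T}, t * volume (D.Q s) := ENNReal.tsum_le_tsum fun s => hb s
  _ ≤ t * (Λ * volume T) := by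
        rw [ENNReal.tsum_mul_left]; gcongr; exact hC T (measurableSet_cube _ _)
  _ = 3 ^ n * Λ * t * volume (D.R i) := by rw [volume_cube_triple, R]; ring

theorem mul_lintegral_op_sq_le [Countable ι] {Λ b t : ℝ≥0∞} {f : (Fin n → ℝ) → ℝ≥0∞}
    (hC : IsCarleson Λ volume D.Q) (hb : ∀ i, b * ∫⁻ y in D.Q i, f y ≤ t * volume (D.Q i)) :
    b * ∫⁻ x, D.op f x ^ 2 ≤ 2 * 3 ^ n * Λ * t * ∑' i, ∫⁻ y in D.Q i, f y := by
  calc b * ∫⁻ x, D.op f x ^ 2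
      = b * ∑' i, ∑' s, D.coef f i * D.coef f s * volume (D.R i ∩ D.R s) := by
        simp only [op]
        rw [lintegral_tsum_indicator_sq _ D.measurableSet_R]
  _ ≤ b * (2 * ∑' i, ∑' s,
        if D.len s ≤ D.len i then D.coef f i * D.coef f s * volume (D.R i ∩ D.R s) else 0) := by
        gcongr
        exact tsum_tsum_le_two_mul_of_symm _ (fun i s => by rw [inter_comm]; ring) D.len
  _ = 2 * ∑' i, D.coef f i * (b * ∑' s,
        if D.len s ≤ D.len i then D.coef f s * volume (D.R i ∩ D.R s) else 0) := by
        rw [mul_left_comm, ← ENNReal.tsum_mul_left]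
        congr 1
        refine tsum_congr fun i => ?_
        rw [← ENNReal.tsum_mul_left, ← ENNReal.tsum_mul_left, ← ENNReal.tsum_mul_left]
        exact tsum_congr fun s => by split_ifs <;> ring
  _ ≤ 2 * ∑' i, D.coef f i * (3 ^ n * Λ * t * volume (D.R i)) :=
        mul_le_mul_right (ENNReal.tsum_le_tsum fun i =>
          mul_le_mul_right (D.mul_tsum_le_volume_R hC hb i) _) _
  _ = 2 * 3 ^ n * Λ * t * ∑' i, ∫⁻ y in D.Q i, f y := by
        simp_rw [← D.coef_mul_volume_R, ← ENNReal.tsum_mul_left]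
        exact tsum_congr fun i => by ring

def avgClass (f : (Fin n → ℝ) → ℝ≥0∞) (t : ℝ≥0∞) (r : ℕ) : Set ι :=
  {i | 4 ^ r * ∫⁻ y in D.Q i, f y ≤ t * volume (D.Q i) ∧
    t * volume (D.Q i) < 4 ^ (r + 1) * ∫⁻ y in D.Q i, f y}

lemma mul_tsum_volume_le {Λ c : ℝ≥0∞} {f : (Fin n → ℝ) → ℝ≥0∞} (hn : n ≠ 0)
    (hC : IsCarleson Λ volume D.Q) (hf : ∫⁻ x, f x ≠ ⊤) (hc : c ≠ 0)
    (hheavy : ∀ i, IsHeavy f c (D.k i) (D.j i)) :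
    c * ∑' i, volume (D.Q i) ≤ Λ * ∫⁻ x, f x := by
  set S := ⋃ p ∈ stoppingCubes f c, dCube p.1 p.2
  have hsub : ∀ i, D.Q i ⊆ S := fun i =>
    let ⟨_, hp, h⟩ := exists_mem_stoppingCubes_superset hn hc hf (hheavy i)
    h.trans (subset_biUnion_of_mem (u := fun p => dCube p.1 p.2) hp)
  calc c * ∑' i, volume (D.Q i) = c * ∑' i : {i // D.Q i ⊆ S}, volume (D.Q i) := by
        congr 1; exact ((Equiv.subtypeUnivEquiv hsub).tsum_eq fun i => volume (D.Q i)).symm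
  _ ≤ c * (Λ * volume S) := by
        gcongr
        exact hC S (.biUnion (to_countable _) fun _ _ => measurableSet_dCube _ _)
  _ ≤ Λ * (c * ∑' p : stoppingCubes f c, volume (dCube p.1.1 p.1.2)) := by
        rw [mul_left_comm]
        gcongr
        exact measure_biUnion_le _ (to_countable _) _
  _ ≤ Λ * ∫⁻ x, f x := by gcongr; exact mul_tsum_volume_stoppingCubes_le

theorem pow_mul_lintegral_avgClass_sq_le [Countable ι] {Λ t : ℝ≥0∞} {f : (Fin n → ℝ) → ℝ≥0∞}
    (hn : n ≠ 0) (hC : IsCarleson Λ volume D.Q) (hf : ∫⁻ x, f x ≠ ⊤) (ht : t ≠ 0) (r : ℕ) :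
    4 ^ r * ∫⁻ x, (D.restrict (D.avgClass f t r)).op f x ^ 2 ≤
      8 * 3 ^ n * Λ ^ 2 * t * ∫⁻ x, f x := by
  set E := D.restrict (D.avgClass f t r)
  have hCE : IsCarleson Λ volume E.Q := hC.comp Subtype.val_injective
  have h4 : (4 : ℝ≥0∞) ^ (r + 1) ≠ 0 := pow_ne_zero _ (by norm_num)
  have h4' : (4 : ℝ≥0∞) ^ (r + 1) ≠ ⊤ := pow_ne_top (by norm_num)
  -- cubes of class `r` lie in stopping cubes at height `t / 4 ^ (r + 1)`
  have hheavy : ∀ i, IsHeavy f (t / 4 ^ (r + 1)) (E.k i) (E.j i) := fun i => by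
    rw [IsHeavy, div_eq_mul_inv, mul_right_comm, ← div_eq_mul_inv,
      ENNReal.div_lt_iff (Or.inl h4) (Or.inl h4')]
    exact i.2.2.trans_eq (mul_comm _ _)
  have hvol := E.mul_tsum_volume_le hn hCE hf (ENNReal.div_ne_zero.2 ⟨ht, h4'⟩) hheavy
  have hsum : 4 ^ r * ∑' i, ∫⁻ y in E.Q i, f y ≤ 4 ^ r * (4 * Λ * ∫⁻ x, f x) := calc
    4 ^ r * ∑' i, ∫⁻ y in E.Q i, f y ≤ ∑' i, t * volume (E.Q i) := by
      rw [← ENNReal.tsum_mul_left]; exact ENNReal.tsum_le_tsum fun i => i.2.1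
    _ = 4 ^ (r + 1) * (t / 4 ^ (r + 1) * ∑' i, volume (E.Q i)) := by
      rw [ENNReal.tsum_mul_left, ← mul_assoc, ENNReal.mul_div_cancel h4 h4']
    _ ≤ 4 ^ (r + 1) * (Λ * ∫⁻ x, f x) := by gcongr
    _ = 4 ^ r * (4 * Λ * ∫⁻ x, f x) := by ring
  refine (ENNReal.mul_le_mul_iff_right (pow_ne_zero r (by norm_num : (4 : ℝ≥0∞) ≠ 0))
    (pow_ne_top (by norm_num : (4 : ℝ≥0∞) ≠ ⊤))).1 ?_
  calc 4 ^ r * (4 ^ r * ∫⁻ x, E.op f x ^ 2)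
      ≤ 4 ^ r * (2 * 3 ^ n * Λ * t * ∑' i, ∫⁻ y in E.Q i, f y) :=
        mul_le_mul_right (E.mul_lintegral_op_sq_le hCE fun i => i.2.1) _
  _ = 2 * 3 ^ n * Λ * t * (4 ^ r * ∑' i, ∫⁻ y in E.Q i, f y) := by ring
  _ ≤ 2 * 3 ^ n * Λ * t * (4 ^ r * (4 * Λ * ∫⁻ x, f x)) := by gcongr
  _ = 4 ^ r * (8 * 3 ^ n * Λ ^ 2 * t * ∫⁻ x, f x) := by ring

theorem mul_volume_tsum_avgClass_le [Countable ι] {Λ t : ℝ≥0∞} {f : (Fin n → ℝ) → ℝ≥0∞}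
    (hn : n ≠ 0) (hC : IsCarleson Λ volume D.Q) (hf : ∫⁻ x, f x ≠ ⊤) (ht0 : t ≠ 0)
    (htop : t ≠ ⊤) :
    t * volume {x | t / 2 < ∑' r, (D.restrict (D.avgClass f t r)).op f x} ≤
      128 * 3 ^ n * Λ ^ 2 * ∫⁻ x, f x := by
  set G := fun r x => (D.restrict (D.avgClass f t r)).op f x
  have hG : ∀ r, Measurable (G r) := fun r => (D.restrict _).measurable_op f
  have hpow : ∀ r : ℕ, (2 : ℝ≥0∞) ^ r = 2⁻¹ ^ r * 4 ^ r := fun r => by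
    rw [← mul_pow, show (4 : ℝ≥0∞) = 2 * 2 by norm_num, ← mul_assoc,
      ENNReal.inv_mul_cancel two_ne_zero ofNat_ne_top, one_mul]
  have hL2 : ∫⁻ x, (∑' r, G r x) ^ 2 ≤ (32 * 3 ^ n * Λ ^ 2 * ∫⁻ x, f x) * t := calc
    ∫⁻ x, (∑' r, G r x) ^ 2 ≤ ∫⁻ x, 2 * ∑' r, 2 ^ r * G r x ^ 2 := lintegral_mono fun x =>
        (tsum_sq_le_of_mul_eq_one _ (fun r => 2⁻¹ ^ r) (fun r => 2 ^ r) fun r => by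
          rw [← mul_pow, ENNReal.inv_mul_cancel two_ne_zero ofNat_ne_top, one_pow]).trans_eq
        (by rw [ENNReal.tsum_geometric_two])
    _ = 2 * ∑' r, 2 ^ r * ∫⁻ x, G r x ^ 2 := by
        rw [lintegral_const_mul _ (Measurable.tsum fun r => ((hG r).pow_const 2).const_mul _),
          lintegral_tsum fun r => (((hG r).pow_const 2).const_mul _).aemeasurable]
        simp_rw [lintegral_const_mul _ ((hG _).pow_const 2)]
    _ ≤ 2 * ∑' r : ℕ, 2⁻¹ ^ r * (8 * 3 ^ n * Λ ^ 2 * t * ∫⁻ x, f x) := by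
        refine mul_le_mul_right (ENNReal.tsum_le_tsum fun r => ?_) _
        rw [hpow, mul_assoc]
        exact mul_le_mul_right (D.pow_mul_lintegral_avgClass_sq_le hn hC hf ht0 r) _
    _ = (32 * 3 ^ n * Λ ^ 2 * ∫⁻ x, f x) * t := by
        rw [ENNReal.tsum_mul_right, ENNReal.tsum_geometric_two]; ring
  calc t * volume {x | t / 2 < ∑' r, G r x} ≤ 4 * (32 * 3 ^ n * Λ ^ 2 * ∫⁻ x, f x) :=
        mul_measure_half_lt_le (Measurable.tsum hG).aemeasurable ht0 htop hL2
  _ = 128 * 3 ^ n * Λ ^ 2 * ∫⁻ x, f x := by ring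

lemma mem_stopped_or_avgClass {t : ℝ≥0∞} {f : (Fin n → ℝ) → ℝ≥0∞} (hn : n ≠ 0)
    (hf : ∫⁻ x, f x ≠ ⊤) (ht0 : t ≠ 0) (htop : t ≠ ⊤) (i : ι) (hi : ∫⁻ y in D.Q i, f y ≠ 0) :
    i ∈ {i | ∃ L ∈ stoppingCubes f t, D.Q i ⊆ dCube L.1 L.2} ∪ ⋃ r, D.avgClass f t r := by
  by_cases hheavy : IsHeavy f t (D.k i) (D.j i)
  · exact Or.inl (exists_mem_stoppingCubes_superset hn ht0 hf hheavy)
  · obtain ⟨r, hr⟩ := exists_pow_four_mul_le_lt hi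
      (ENNReal.mul_ne_top htop (volume_dCube_ne_top _ _)) (not_lt.1 hheavy)
    exact Or.inr (mem_iUnion.2 ⟨r, hr⟩)

lemma pairwiseDisjoint_Q_of_k_eq (hinj : Function.Injective fun i => (D.k i, D.j i))
    {s : Set ι} {k₀ : ℤ} (hk : ∀ i ∈ s, D.k i = k₀) : s.PairwiseDisjoint D.Q := by
  intro i hi i' hi' hne
  rw [Function.onFun, disjoint_iff_inter_eq_empty, ← not_nonempty_iff_eq_empty]
  intro h
  rw [Q, Q, hk i hi, hk i' hi'] at h
  exact hne (hinj (Prod.ext ((hk i hi).trans (hk i' hi').symm) (eq_of_inter_dCube h)))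

lemma tsum_setLIntegral_le_of_k_eq [Countable ι] (hinj : Function.Injective fun i => (D.k i, D.j i))
    {s : Set ι} {k₀ : ℤ} (hk : ∀ i ∈ s, D.k i = k₀) {A : Set (Fin n → ℝ)}
    (hA : ∀ i ∈ s, D.Q i ⊆ A) (f : (Fin n → ℝ) → ℝ≥0∞) :
    ∑' i : s, ∫⁻ y in D.Q i, f y ≤ ∫⁻ y in A, f y := by
  rw [← lintegral_biUnion (to_countable s) (fun i _ => D.measurableSet_Q i)
    (D.pairwiseDisjoint_Q_of_k_eq hinj hk) f]
  exact lintegral_mono_set (iUnion₂_subset hA)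

lemma tsum_setLIntegral_within_generations_le [Countable ι] (hn : n ≠ 0)
    (hinj : Function.Injective fun i => (D.k i, D.j i)) {𝓛 : Set (ℤ × (Fin n → ℤ))}
    (h𝓛 : 𝓛.PairwiseDisjoint fun L => dCube L.1 L.2) (N : ℕ) (f : (Fin n → ℝ) → ℝ≥0∞) :
    ∑' i : {i | ∃ L ∈ 𝓛, D.Q i ⊆ dCube L.1 L.2 ∧ D.k i ≤ L.1 + N}, ∫⁻ y in D.Q i, f y ≤
      (N + 1) * ∫⁻ x, f x := by
  set S : 𝓛 × Fin (N + 1) → Set ι :=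
    fun p => {i | D.Q i ⊆ dCube p.1.1.1 p.1.1.2 ∧ D.k i = p.1.1.1 + p.2}
  have hcover : {i | ∃ L ∈ 𝓛, D.Q i ⊆ dCube L.1 L.2 ∧ D.k i ≤ L.1 + N} ⊆ ⋃ p, S p := by
    rintro i ⟨L, hL, hsub, hk⟩
    have hle : L.1 ≤ D.k i := le_of_dCube_subset hn hsub
    exact mem_iUnion.2 ⟨(⟨L, hL⟩, ⟨(D.k i - L.1).toNat, by omega⟩), hsub, by simp; omega⟩
  calc _ ≤ ∑' i : ↥(⋃ p, S p), ∫⁻ y in D.Q i, f y :=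
        ENNReal.tsum_mono_subtype (fun i => ∫⁻ y in D.Q i, f y) hcover
  _ ≤ ∑' p, ∑' i : S p, ∫⁻ y in D.Q i, f y :=
        ENNReal.tsum_iUnion_le_tsum (fun i => ∫⁻ y in D.Q i, f y) S
  _ ≤ ∑' p : 𝓛 × Fin (N + 1), ∫⁻ y in dCube p.1.1.1 p.1.1.2, f y :=
        ENNReal.tsum_le_tsum fun p =>
          D.tsum_setLIntegral_le_of_k_eq hinj (fun i hi => hi.2) (fun i hi => hi.1) f
  _ = (N + 1) * ∑' L : 𝓛, ∫⁻ y in dCube L.1.1 L.1.2, f y := by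
        rw [ENNReal.tsum_prod
          (f := fun (L : 𝓛) (_ : Fin (N + 1)) => ∫⁻ y in dCube L.1.1 L.1.2, f y),
          ← ENNReal.tsum_mul_left]
        simp
  _ ≤ (N + 1) * ∫⁻ x, f x := by
        gcongr
        rw [← lintegral_biUnion (to_countable 𝓛) (fun L _ => measurableSet_dCube _ _) h𝓛 f]
        exact setLIntegral_le_lintegral _ _

lemma k_le_of_not_subset_unionTriples {N : ℕ}
    (hlen : ∀ i, D.len i ≤ 2 ^ N * side (D.k i)) {𝓛 : Set (ℤ × (Fin n → ℤ))} {i : ι}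
    {L : ℤ × (Fin n → ℤ)} (hL : L ∈ 𝓛) (hsub : D.Q i ⊆ dCube L.1 L.2)
    (h : ¬ D.R i ⊆ unionTriples 𝓛) : D.k i ≤ L.1 + N := by
  -- otherwise `R i`, which meets `L` in `Q i`, is no larger than `L` and so lies in `3L`
  by_contra! hk
  apply h
  have hlenL : D.len i ≤ side L.1 := calc
    D.len i ≤ 2 ^ N * side (D.k i) := hlen i
    _ = side (D.k i - N) := by
        rw [side_eq_side_mul_pow (show D.k i - N ≤ D.k i by omega), mul_comm]
        congr
        omega
    _ ≤ side L.1 := side_le_side_iff.2 (by omega)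
  have hne :
      (cube (D.corner i) (D.len i) ∩ cube (fun l => side L.1 * L.2 l) (side L.1)).Nonempty := by
    rw [← dCube_eq_cube]
    exact (dCube_nonempty _ _).mono (subset_inter (D.Q_subset_R i) hsub)
  exact (cube_subset_triple hlenL hne).trans (subset_biUnion_of_mem
    (u := fun L => cube (fun l => side L.1 * L.2 l - side L.1) (3 * side L.1)) hL)

theorem setLIntegral_compl_unionTriples_op_le [Countable ι] (hn : n ≠ 0)
    (hinj : Function.Injective fun i => (D.k i, D.j i)) {N : ℕ}
    (hlen : ∀ i, D.len i ≤ 2 ^ N * side (D.k i)) {𝓛 : Set (ℤ × (Fin n → ℤ))}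
    (h𝓛 : 𝓛.PairwiseDisjoint fun L => dCube L.1 L.2) (hcov : ∀ i, ∃ L ∈ 𝓛, D.Q i ⊆ dCube L.1 L.2)
    (f : (Fin n → ℝ) → ℝ≥0∞) :
    ∫⁻ x in (unionTriples 𝓛)ᶜ, D.op f x ≤ (N + 1) * ∫⁻ x, f x := by
  set near := {i | ∃ L ∈ 𝓛, D.Q i ⊆ dCube L.1 L.2 ∧ D.k i ≤ L.1 + N}
  calc ∫⁻ x in (unionTriples 𝓛)ᶜ, D.op f x
      = ∑' i, D.coef f i * volume (D.R i ∩ (unionTriples 𝓛)ᶜ) := by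
        simp only [op]
        rw [lintegral_tsum fun i => (measurable_const.indicator (D.measurableSet_R i)).aemeasurable]
        simp_rw [lintegral_indicator_const (D.measurableSet_R _),
          Measure.restrict_apply (D.measurableSet_R _)]
  _ ≤ ∑' i, near.indicator (fun i => ∫⁻ y in D.Q i, f y) i := by
        refine ENNReal.tsum_le_tsum fun i => ?_
        by_cases hsub : D.R i ⊆ unionTriples 𝓛
        · rw [← sdiff_eq, sdiff_eq_empty.2 hsub]
          simp
        · obtain ⟨L, hL, hQL⟩ := hcov i
          rw [indicator_of_mem (show i ∈ near from
            ⟨L, hL, hQL, D.k_le_of_not_subset_unionTriples hlen hL hQL hsub⟩),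
            ← D.coef_mul_volume_R]
          gcongr
          exact inter_subset_left
  _ = ∑' i : near, ∫⁻ y in D.Q i, f y := (tsum_subtype _ _).symm
  _ ≤ (N + 1) * ∫⁻ x, f x := D.tsum_setLIntegral_within_generations_le hn hinj h𝓛 N f

lemma mul_volume_compl_unionTriples_le [Countable ι] (hn : n ≠ 0)
    (hinj : Function.Injective fun i => (D.k i, D.j i)) {N : ℕ}
    (hlen : ∀ i, D.len i ≤ 2 ^ N * side (D.k i)) {𝓛 : Set (ℤ × (Fin n → ℤ))}
    (h𝓛 : 𝓛.PairwiseDisjoint fun L => dCube L.1 L.2) (hcov : ∀ i, ∃ L ∈ 𝓛, D.Q i ⊆ dCube L.1 L.2)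
    {f : (Fin n → ℝ) → ℝ≥0∞} {t : ℝ≥0∞} :
    t * volume ({x | t / 2 ≤ D.op f x} ∩ (unionTriples 𝓛)ᶜ) ≤ 2 * ((N + 1) * ∫⁻ x, f x) := by
  have hcheb := mul_meas_ge_le_lintegral₀ (μ := volume.restrict (unionTriples 𝓛)ᶜ)
    (D.measurable_op f).aemeasurable (t / 2)
  rw [Measure.restrict_apply' (measurableSet_unionTriples _).compl] at hcheb
  calc t * volume ({x | t / 2 ≤ D.op f x} ∩ (unionTriples 𝓛)ᶜ)
      = 2 * (t / 2 * volume ({x | t / 2 ≤ D.op f x} ∩ (unionTriples 𝓛)ᶜ)) := by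
        rw [← mul_assoc, ENNReal.mul_div_cancel two_ne_zero ofNat_ne_top]
  _ ≤ 2 * ∫⁻ x in (unionTriples 𝓛)ᶜ, D.op f x := by gcongr
  _ ≤ 2 * ((N + 1) * ∫⁻ x, f x) := by
        gcongr; exact D.setLIntegral_compl_unionTriples_op_le hn hinj hlen h𝓛 hcov f

theorem mul_volume_lt_op_le [Countable ι] {Λ t : ℝ≥0∞} {N : ℕ} {f : (Fin n → ℝ) → ℝ≥0∞}
    (hn : n ≠ 0) (hC : IsCarleson Λ volume D.Q) (hinj : Function.Injective fun i => (D.k i, D.j i))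
    (hlen : ∀ i, D.len i ≤ 2 ^ N * side (D.k i)) (hf : ∫⁻ x, f x ≠ ⊤) :
    t * volume {x | t < D.op f x} ≤ (2 * (N + 1) + 3 ^ n + 128 * 3 ^ n * Λ ^ 2) * ∫⁻ x, f x := by
  rcases eq_or_ne t 0 with rfl | ht0
  · simp
  rcases eq_or_ne t ⊤ with rfl | htop
  · simp
  set stopped := {i | ∃ L ∈ stoppingCubes f t, D.Q i ⊆ dCube L.1 L.2}
  have hsplit : ∀ x, D.op f x ≤
      (D.restrict stopped).op f x + ∑' r, (D.restrict (D.avgClass f t r)).op f x :=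
    D.op_le_add_tsum f (D.mem_stopped_or_avgClass hn hf ht0 htop)
  calc t * volume {x | t < D.op f x}
      ≤ t * (volume ({x | t / 2 ≤ (D.restrict stopped).op f x} ∩
          (unionTriples (stoppingCubes f t))ᶜ) + volume (unionTriples (stoppingCubes f t)) +
          volume {x | t / 2 < ∑' r, (D.restrict (D.avgClass f t r)).op f x}) := by
        gcongr; exact measure_lt_le_of_le_add htop hsplit _
  _ ≤ 2 * ((N + 1) * ∫⁻ x, f x) + 3 ^ n * (∫⁻ x, f x) + 128 * 3 ^ n * Λ ^ 2 * ∫⁻ x, f x := by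
        rw [mul_add, mul_add]
        exact add_le_add (add_le_add ((D.restrict stopped).mul_volume_compl_unionTriples_le hn
          (hinj.comp Subtype.val_injective) (fun i => hlen i) pairwiseDisjoint_stoppingCubes
          (fun i => i.2)) mul_volume_unionTriples_stoppingCubes_le)
          (D.mul_volume_tsum_avgClass_le hn hC hf ht0 htop)
  _ = (2 * (N + 1) + 3 ^ n + 128 * 3 ^ n * Λ ^ 2) * ∫⁻ x, f x := by ring

section Sparse

variable {κ : Type*} {Q : ℤ → κ → Set (Fin n → ℝ)}

lemma isCarleson_of_isSparse [Countable κ] (hQ : IsSparse volume Q)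
    (hdy : ∀ k j, Q k j = ∅ ∨ ∃ K J, Q k j = dCube K J) {e : ι → ℤ × κ}
    (he : Function.Injective e) (hDQ : ∀ i, D.Q i = Q (e i).1 (e i).2) :
    IsCarleson 2 volume D.Q := by
  have hmeas : ∀ k j, MeasurableSet (Q k j) := fun k j => by
    rcases hdy k j with h | ⟨K, J, h⟩ <;> simp [h, measurableSet_dCube]
  have hfin : ∀ k j, volume (Q k j) ≠ ⊤ := fun k j => by
    rcases hdy k j with h | ⟨K, J, h⟩ <;> simp [h, volume_dCube_ne_top]
  rw [show D.Q = (fun p : ℤ × κ => Q p.1 p.2) ∘ e from funext hDQ]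
  exact (hQ.isCarleson hmeas hfin).comp he

lemma injective_of_isSparse (hQ : IsSparse volume Q) {e : ι → ℤ × κ}
    (he : Function.Injective e) (hDQ : ∀ i, D.Q i = Q (e i).1 (e i).2) :
    Function.Injective fun i => (D.k i, D.j i) := fun i i' h =>
  he (hQ.eq_of_eq (hDQ i ▸ volume_dCube_ne_zero _ _) (hDQ i ▸ volume_dCube_ne_top _ _)
    (by rw [← hDQ, ← hDQ]; exact congrArg (fun p : ℤ × (Fin n → ℤ) => dCube p.1 p.2) h))

end Sparse

end AdaptedFamily

theorem AdaptedFamily.mul_volume_lt_op_le_of_dim_zero {ι : Type*} (D : AdaptedFamily 0 ι)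
    {Λ : ℝ≥0∞} (hC : IsCarleson Λ volume D.Q) (f : (Fin 0 → ℝ) → ℝ≥0∞) (t : ℝ≥0∞) :
    t * volume {x | t < D.op f x} ≤ Λ * ∫⁻ x, f x := by
  -- the space is a point of volume `1`, so `A* f` is constant, at most `Λ ∫ f`
  have huniv : ∀ s : Set (Fin 0 → ℝ), s.Nonempty → s = univ :=
    fun _ => Subsingleton.eq_univ_of_nonempty
  have hvol : volume (univ : Set (Fin 0 → ℝ)) = 1 := by
    rw [← huniv (cube 0 1) ⟨0, fun i => i.elim0⟩, volume_cube, pow_zero]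
  have hQ : ∀ i, D.Q i = univ := fun i => huniv _ (dCube_nonempty _ _)
  have hR : ∀ i, D.R i = univ := fun i => huniv _ ((dCube_nonempty _ _).mono (D.Q_subset_R i))
  have hcard : ∑' _ : ι, (1 : ℝ≥0∞) ≤ Λ := calc
    ∑' _ : ι, (1 : ℝ≥0∞) = ∑' i : {i // D.Q i ⊆ univ}, volume (D.Q i) := by
      rw [← (Equiv.subtypeUnivEquiv fun i => subset_univ (D.Q i)).tsum_eq]
      simp [hQ, hvol]
    _ ≤ Λ * volume univ := hC univ .univ
    _ = Λ := by rw [hvol, mul_one]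
  have hop : ∀ x, D.op f x ≤ Λ * ∫⁻ x, f x := fun x => calc
    D.op f x = ∑' _ : ι, 1 * ∫⁻ x, f x := by
      simp [AdaptedFamily.op, AdaptedFamily.coef, hQ, hR, hvol]
    _ ≤ Λ * ∫⁻ x, f x := by rw [ENNReal.tsum_mul_right]; gcongr
  rcases eq_empty_or_nonempty {x | t < D.op f x} with h | ⟨x, hx⟩
  · simp [h]
  · calc t * volume {x | t < D.op f x} ≤ t * 1 := by
          gcongr; exact hvol ▸ measure_mono (subset_univ _)
    _ ≤ Λ * ∫⁻ x, f x := by rw [mul_one]; exact hx.le.trans (hop x)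

lemma exists_adaptedFamily {m : ℕ} {α : Fin n → ℝ} {Q R : ℤ → ℕ → Set (Fin n → ℝ)}
    (hQR : ∀ k j, (Q k j = ∅ ∧ R k j = ∅) ∨
      ∃ (K : ℤ) (J : Fin n → ℤ) (K' : ℤ) (J' : Fin n → ℤ),
        Q k j = dCube K J ∧ R k j = sCube α K' J' ∧
        dilateD K J (2 ^ m) ⊆ R k j ∧ (2 : ℝ) ^ (-K') ≤ 6 * 2 ^ m * (2 : ℝ) ^ (-K)) :
    ∃ D : AdaptedFamily n {p : ℤ × ℕ // (Q p.1 p.2).Nonempty},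
      (∀ i, D.Q i = Q i.1.1 i.1.2) ∧ (∀ i, D.len i ≤ 2 ^ (m + 3) * side (D.k i)) ∧
      ∀ f x, Astar Q R f x = D.op f x := by
  have h : ∀ p : {p : ℤ × ℕ // (Q p.1 p.2).Nonempty},
      ∃ (K : ℤ) (J : Fin n → ℤ) (K' : ℤ) (J' : Fin n → ℤ),
        Q p.1.1 p.1.2 = dCube K J ∧ R p.1.1 p.1.2 = sCube α K' J' ∧
        dilateD K J (2 ^ m) ⊆ R p.1.1 p.1.2 ∧ (2 : ℝ) ^ (-K') ≤ 6 * 2 ^ m * (2 : ℝ) ^ (-K) :=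
    fun p => (hQR p.1.1 p.1.2).resolve_left fun h => p.2.ne_empty h.1
  choose K J K' J' hQ hR hdil hside using h
  have hRc : ∀ i, R i.1.1 i.1.2 = cube (fun l => side (K' i) * (J' i l + α l)) (side (K' i)) :=
    fun i => (hR i).trans (sCube_eq_cube _ _ _)
  let D : AdaptedFamily n {p : ℤ × ℕ // (Q p.1 p.2).Nonempty} :=
    { k := K, j := J, corner := fun i l => side (K' i) * (J' i l + α l), len := fun i => side (K' i)
      dCube_subset := fun i => (dCube_subset_dilateD (one_le_pow₀ one_le_two)).trans
        ((hdil i).trans (hRc i).le) }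
  refine ⟨D, fun i => (hQ i).symm, fun i => ?_, fun f x => ?_⟩
  · calc side (K' i) ≤ 6 * 2 ^ m * side (K i) := hside i
    _ ≤ 2 ^ (m + 3) * side (K i) := by
        refine mul_le_mul_of_nonneg_right ?_ (side_pos _).le
        rw [pow_add]
        linarith [pow_pos (two_pos : (0 : ℝ) < 2) m]
  · have hempty : ∀ p : ℤ × ℕ, ¬ (Q p.1 p.2).Nonempty → R p.1 p.2 = ∅ := fun p hp =>
      ((hQR p.1 p.2).resolve_right fun ⟨K, J, _, _, h, _⟩ => hp (h ▸ dCube_nonempty K J)).2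
    rw [Astar, ← tsum_subtype_eq_of_support_subset (s := {p : ℤ × ℕ | (Q p.1 p.2).Nonempty})]
    · refine tsum_congr fun i => ?_
      rw [show R i.1.1 i.1.2 = D.R i from hRc i, show Q i.1.1 i.1.2 = D.Q i from hQ i]
      rfl
    · intro p hp
      by_contra h
      exact hp (by simp [hempty p h])

end SparseAdjoint

open SparseAdjoint

/-- With `{Q_j^k}` sparse in the standard dyadic grid, `Q_{j,α}^k ∈ D_α`,
`2^m Q_j^k ⊆ Q_{j,α}^k`, and `ℓ(Q_{j,α}^k) ≤ 6·2^m ℓ(Q_j^k)`, the weak-type bound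
`‖A*_{m,α} f‖_{L^{1,∞}} ≤ C(n) m ‖f‖_{L¹}` holds for all `f ∈ L¹`, `f ≥ 0`, `m ≥ 1`. -/
theorem stmt14 (n : ℕ) :
    ∃ C : ℝ≥0, 0 < C ∧
      ∀ (m : ℕ), 1 ≤ m →
      ∀ (α : Fin n → ℝ), (∀ i, α i = 0 ∨ α i = 1/3) →
      ∀ (Q R : ℤ → ℕ → Set (Fin n → ℝ)),
      (∀ k, ∀ j j', j ≠ j' → Disjoint (Q k j) (Q k j')) →
      (∀ k, (⋃ j, Q (k+1) j) ⊆ ⋃ j, Q k j) →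
      (∀ k j, volume ((⋃ i, Q (k+1) i) ∩ Q k j) ≤ volume (Q k j) / 2) →
      (∀ k j, (Q k j = ∅ ∧ R k j = ∅) ∨
        ∃ (K : ℤ) (J : Fin n → ℤ) (K' : ℤ) (J' : Fin n → ℤ),
          Q k j = dCube K J ∧ R k j = sCube α K' J' ∧
          dilateD K J (2^m) ⊆ R k j ∧ (2:ℝ)^(-K') ≤ 6 * 2^m * (2:ℝ)^(-K)) →
      ∀ (f : (Fin n → ℝ) → ℝ≥0∞), Measurable f → (∫⁻ x, f x < ⊤) →
      ∀ t : ℝ≥0∞,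
        t * volume {x | t < Astar Q R f x} ≤ C * m * ∫⁻ x, f x := by
  refine ⟨2 ^ 11 * 3 ^ n, by positivity, fun m hm α _ Q R hdisj hnest hhalf hQR f _ hf t => ?_⟩
  obtain ⟨D, hDQ, hlen, hop⟩ := exists_adaptedFamily hQR
  have hsparse : IsSparse volume Q := ⟨hdisj, hnest, hhalf⟩
  have hdyadic : ∀ k j, Q k j = ∅ ∨ ∃ K J, Q k j = dCube K J := fun k j =>
    (hQR k j).imp And.left fun ⟨K, J, _, _, h, _⟩ => ⟨K, J, h⟩
  have hC := D.isCarleson_of_isSparse hsparse hdyadic Subtype.val_injective hDQ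
  have hinj := D.injective_of_isSparse hsparse Subtype.val_injective hDQ
  simp_rw [hop]
  rcases Nat.eq_zero_or_pos n with rfl | hn
  · refine (D.mul_volume_lt_op_le_of_dim_zero hC f t).trans ?_
    gcongr
    exact_mod_cast (by omega : 2 ≤ 2 ^ 11 * 3 ^ 0 * m)
  · refine (D.mul_volume_lt_op_le hn.ne' hC hinj hlen hf.ne).trans ?_
    gcongr
    have : 1 ≤ 3 ^ n := Nat.one_le_pow _ _ three_pos
    exact_mod_cast (show 2 * (m + 3 + 1) + 3 ^ n + 128 * 3 ^ n * 2 ^ 2 ≤ 2 ^ 11 * 3 ^ n * m by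
      nlinarith)
end

section
/- Suppose an operator S satisfies the weak-type bound ‖S g‖_{L^{1,∞}} ≤ A ‖g‖_{L¹}, and suppose for a cube Q and function f ≥ 0 there is a constant c with |S f − c| χ_Q ≤ S(f χ_Q) pointwise on Q. Then the local mean oscillation satisfies ω_λ(S f; Q) ≤ (A/λ) f_Q for every 0 < λ < 1, where f_Q = (1/|Q|)∫_Q f. -/
/-!
On `Q` the oscillation `|Sf - c|` is dominated by `S(fχ_Q)`, so every level set of
`(Sf - c)χ_Q` lies in the corresponding level set of `S(fχ_Q)`. The weak-type bound makes the
measure of `{|S(fχ_Q)| > s}` at most `A ‖fχ_Q‖₁ / s = A |Q| f_Q / s`, which is at most `λ|Q|`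
as soon as `s > (A/λ) f_Q`; hence the rearrangement at `λ|Q|` is at most `(A/λ) f_Q`.
-/

open Set MeasureTheory ENNReal

/-- The cube `a + [0, ℓ)ⁿ`. -/
def cubeOf {n : ℕ} (a : Fin n → ℝ) (ℓ : ℝ) : Set (Fin n → ℝ) :=
  {y | ∀ i, a i ≤ y i ∧ y i < a i + ℓ}

/-- The non-increasing rearrangement `g^*(t) = inf{s > 0 : |{|g| > s}| ≤ t}`. -/
noncomputable def rearr {n : ℕ} (g : (Fin n → ℝ) → ℝ) (t : ℝ) : ℝ :=
  sInf {s : ℝ | 0 < s ∧ volume {x | s < |g x|} ≤ ENNReal.ofReal t}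

/-- The local mean oscillation `ω_λ(g; Q) = inf_{c ∈ ℝ} ((g − c)χ_Q)^*(λ|Q|)`. -/
noncomputable def oscLam {n : ℕ} (lam : ℝ) (g : (Fin n → ℝ) → ℝ)
    (Q : Set (Fin n → ℝ)) : ℝ :=
  ⨅ c : ℝ, rearr (Q.indicator fun y => g y - c) (lam * (volume Q).toReal)

section Cube

variable {n : ℕ} (a : Fin n → ℝ) (ℓ : ℝ)

lemma cubeOf_eq_pi : cubeOf a ℓ = Set.univ.pi fun i => Ico (a i) (a i + ℓ) := by
  ext y
  simp [cubeOf, Set.mem_pi]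

lemma measurableSet_cubeOf : MeasurableSet (cubeOf a ℓ) := by
  rw [cubeOf_eq_pi]
  exact MeasurableSet.univ_pi fun _ => measurableSet_Ico

lemma volume_cubeOf : volume (cubeOf a ℓ) = ENNReal.ofReal ℓ ^ n := by
  simp [cubeOf_eq_pi, volume_pi_pi, Real.volume_Ico]

lemma toReal_volume_cubeOf_pos {ℓ : ℝ} (hℓ : 0 < ℓ) : 0 < (volume (cubeOf a ℓ)).toReal := by
  rw [volume_cubeOf, ENNReal.toReal_pow, ENNReal.toReal_ofReal hℓ.le]
  positivity

end Cube

section Rearrangement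

variable {n : ℕ}

lemma rearr_nonneg (g : (Fin n → ℝ) → ℝ) (t : ℝ) : 0 ≤ rearr g t :=
  Real.sInf_nonneg fun _ hs => hs.1.le

lemma rearr_le_of_forall_lt {g : (Fin n → ℝ) → ℝ} {t s₀ : ℝ} (hs₀ : 0 ≤ s₀)
    (h : ∀ s, s₀ < s → volume {x | s < |g x|} ≤ ENNReal.ofReal t) : rearr g t ≤ s₀ :=
  le_of_forall_pos_le_add fun _ hε =>
    csInf_le ⟨0, fun _ hs => hs.1.le⟩ ⟨by linarith, h _ (by linarith)⟩

lemma rearr_le_div_of_weakType {g : (Fin n → ℝ) → ℝ} {t B : ℝ} (hB : 0 ≤ B) (ht : 0 < t)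
    (h : ∀ s, 0 < s → ENNReal.ofReal s * volume {x | s < |g x|} ≤ ENNReal.ofReal B) :
    rearr g t ≤ B / t := by
  refine rearr_le_of_forall_lt (div_nonneg hB ht.le) fun s hs => ?_
  have hs0 : 0 < s := lt_of_le_of_lt (div_nonneg hB ht.le) hs
  have hBs : B / s ≤ t := (div_le_iff₀ hs0).2 (by linarith [(div_lt_iff₀ ht).1 hs])
  calc volume {x | s < |g x|} ≤ ENNReal.ofReal B / ENNReal.ofReal s := by
        rw [ENNReal.le_div_iff_mul_le (by simp [hs0]) (by simp), mul_comm]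
        exact h s hs0
    _ = ENNReal.ofReal (B / s) := (ENNReal.ofReal_div_of_pos hs0).symm
    _ ≤ ENNReal.ofReal t := ENNReal.ofReal_le_ofReal hBs

lemma oscLam_le_rearr (lam : ℝ) (g : (Fin n → ℝ) → ℝ) (Q : Set (Fin n → ℝ)) (c : ℝ) :
    oscLam lam g Q ≤ rearr (Q.indicator fun y => g y - c) (lam * (volume Q).toReal) :=
  ciInf_le ⟨0, by rintro _ ⟨c', rfl⟩; exact rearr_nonneg _ _⟩ c

end Rearrangement

lemma setOf_lt_abs_indicator_subset {α : Type*} {Q : Set α} {g h : α → ℝ} {s : ℝ} (hs : 0 ≤ s)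
    (hdom : ∀ x ∈ Q, |g x| ≤ h x) : {x | s < |Q.indicator g x|} ⊆ {x | s < |h x|} := by
  intro x hx
  by_cases hxQ : x ∈ Q
  · rw [mem_ofPred_eq, indicator_of_mem hxQ] at hx
    exact hx.trans_le ((hdom x hxQ).trans (le_abs_self _))
  · rw [mem_ofPred_eq, indicator_of_notMem hxQ, abs_zero] at hx
    exact absurd hx hs.not_gt

lemma integral_abs_indicator_of_nonneg {α : Type*} [MeasurableSpace α] {μ : Measure α}
    {Q : Set α} (hQ : MeasurableSet Q) {f : α → ℝ} (hf : ∀ x ∈ Q, 0 ≤ f x) :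
    ∫ x, |Q.indicator f x| ∂μ = ∫ x in Q, f x ∂μ := by
  simp_rw [← Real.norm_eq_abs, norm_indicator_eq_indicator_norm, integral_indicator hQ,
    Real.norm_eq_abs]
  exact setIntegral_congr_fun hQ fun x hx => abs_of_nonneg (hf x hx)

theorem stmt16_general {n : ℕ} (S : ((Fin n → ℝ) → ℝ) → ((Fin n → ℝ) → ℝ)) (A : ℝ) (hA : 0 < A)
    (hweak : ∀ g, Integrable g → ∀ t : ℝ, 0 < t →
      ENNReal.ofReal t * volume {x | t < |S g x|} ≤ ENNReal.ofReal (A * ∫ x, |g x|))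
    (a : Fin n → ℝ) (ℓ : ℝ) (hℓ : 0 < ℓ)
    (f : (Fin n → ℝ) → ℝ) (hf0 : ∀ x, 0 ≤ f x) (hfi : IntegrableOn f (cubeOf a ℓ))
    (c : ℝ) (hdom : ∀ x ∈ cubeOf a ℓ, |S f x - c| ≤ S ((cubeOf a ℓ).indicator f) x)
    (lam : ℝ) (hlam0 : 0 < lam) :
    oscLam lam (S f) (cubeOf a ℓ) ≤
      (A / lam) * ((∫ x in cubeOf a ℓ, f x) / (volume (cubeOf a ℓ)).toReal) := by
  set Q := cubeOf a ℓ
  have hQ : MeasurableSet Q := measurableSet_cubeOf a ℓ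
  have hL : 0 < (volume Q).toReal := toReal_volume_cubeOf_pos a hℓ
  have hI : 0 ≤ ∫ x in Q, f x := setIntegral_nonneg hQ fun x _ => hf0 x
  have hweakQ := hweak _ ((integrable_indicator_iff hQ).2 hfi)
  rw [integral_abs_indicator_of_nonneg hQ fun x _ => hf0 x] at hweakQ
  calc oscLam lam (S f) Q
      ≤ rearr (Q.indicator fun y => S f y - c) (lam * (volume Q).toReal) :=
        oscLam_le_rearr lam (S f) Q c
    _ ≤ (A * ∫ x in Q, f x) / (lam * (volume Q).toReal) := by
        refine rearr_le_div_of_weakType (by positivity) (by positivity) fun s hs => ?_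
        calc ENNReal.ofReal s * volume {x | s < |Q.indicator (fun y => S f y - c) x|}
            ≤ ENNReal.ofReal s * volume {x | s < |S (Q.indicator f) x|} :=
              mul_le_mul_right (measure_mono (setOf_lt_abs_indicator_subset hs.le hdom)) _
          _ ≤ _ := hweakQ s hs
    _ = (A / lam) * ((∫ x in Q, f x) / (volume Q).toReal) := by
        rw [div_mul_div_comm]

/-- If `S` satisfies the weak-type bound `‖Sg‖_{L^{1,∞}} ≤ A‖g‖_{L¹}` and there is a constant
`c` with `|Sf − c| χ_Q ≤ S(f χ_Q)` on the cube `Q` for `f ≥ 0`, then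
`ω_λ(Sf; Q) ≤ (A/λ) f_Q` for every `0 < λ < 1`. -/
theorem stmt16 {n : ℕ} (S : ((Fin n → ℝ) → ℝ) → ((Fin n → ℝ) → ℝ)) (A : ℝ) (hA : 0 < A)
    (hweak : ∀ g, Integrable g → ∀ t : ℝ, 0 < t →
      ENNReal.ofReal t * volume {x | t < |S g x|} ≤ ENNReal.ofReal (A * ∫ x, |g x|))
    (a : Fin n → ℝ) (ℓ : ℝ) (hℓ : 0 < ℓ)
    (f : (Fin n → ℝ) → ℝ) (hf0 : ∀ x, 0 ≤ f x) (hfi : IntegrableOn f (cubeOf a ℓ))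
    (c : ℝ) (hdom : ∀ x ∈ cubeOf a ℓ, |S f x - c| ≤ S ((cubeOf a ℓ).indicator f) x)
    (lam : ℝ) (hlam0 : 0 < lam) (hlam1 : lam < 1) :
    oscLam lam (S f) (cubeOf a ℓ) ≤
      (A / lam) * ((∫ x in cubeOf a ℓ, f x) / (volume (cubeOf a ℓ)).toReal) :=
  stmt16_general S A hA hweak a ℓ hℓ f hf0 hfi c hdom lam hlam0
end
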